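/- arXiv:2412.10086 — 9 statements merged into one kernel-verified Lean document; each statement's English description precedes it below -/
import Mathlib

section
/- For a Legendre curve (γ, ν) with curvature (ℓ, β) and any λ ∈ ℝ, the parallel curve γ_λ(t) = γ(t) + λν(t) satisfies γ_λ'(t)·ν(t) = 0 for all t; that is, (γ_λ, ν) is again a Legendre curve, and its curvature is (ℓ, β + λℓ). -/
/-- The parallel curve `γ_λ = γ + λν` of a Legendre curve `(γ, ν)` again satisfies
`γ_λ'·ν = 0` (so `(γ_λ, ν)` is a Legendre curve) and has curvature `(ℓ, β + λℓ)`. -/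
theorem stmt_2
    (γ₁ γ₂ ν₁ ν₂ ℓ β : ℝ → ℝ) (lam : ℝ)
    (hγ₁ : ContDiff ℝ (⊤ : ℕ∞) γ₁) (hγ₂ : ContDiff ℝ (⊤ : ℕ∞) γ₂)
    (hν₁ : ContDiff ℝ (⊤ : ℕ∞) ν₁) (hν₂ : ContDiff ℝ (⊤ : ℕ∞) ν₂)
    (hunit : ∀ t, ν₁ t ^ 2 + ν₂ t ^ 2 = 1)
    (hleg : ∀ t, deriv γ₁ t * ν₁ t + deriv γ₂ t * ν₂ t = 0)
    (hℓ : ∀ t, ℓ t = deriv ν₁ t * (-ν₂ t) + deriv ν₂ t * ν₁ t)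
    (hβ : ∀ t, β t = deriv γ₁ t * (-ν₂ t) + deriv γ₂ t * ν₁ t) :
    ∀ t,
      deriv (fun s => γ₁ s + lam * ν₁ s) t * ν₁ t +
        deriv (fun s => γ₂ s + lam * ν₂ s) t * ν₂ t = 0 ∧
      deriv (fun s => γ₁ s + lam * ν₁ s) t * (-ν₂ t) +
        deriv (fun s => γ₂ s + lam * ν₂ s) t * ν₁ t = β t + lam * ℓ t := by
  intro t
  have dγ1 : DifferentiableAt ℝ γ₁ t := (hγ₁.differentiable (by simp)).differentiableAt
  have dγ2 : DifferentiableAt ℝ γ₂ t := (hγ₂.differentiable (by simp)).differentiableAt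
  have d1 : DifferentiableAt ℝ ν₁ t := (hν₁.differentiable (by simp)).differentiableAt
  have d2 : DifferentiableAt ℝ ν₂ t := (hν₂.differentiable (by simp)).differentiableAt
  have h1 : deriv (fun s => γ₁ s + lam * ν₁ s) t = deriv γ₁ t + lam * deriv ν₁ t := by
    rw [deriv_fun_add dγ1 (d1.const_mul lam), deriv_const_mul lam d1]
  have h2 : deriv (fun s => γ₂ s + lam * ν₂ s) t = deriv γ₂ t + lam * deriv ν₂ t := by
    rw [deriv_fun_add dγ2 (d2.const_mul lam), deriv_const_mul lam d2]
  have horth : ν₁ t * deriv ν₁ t + ν₂ t * deriv ν₂ t = 0 := by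
    have hu : HasDerivAt (fun s => ν₁ s ^ 2 + ν₂ s ^ 2)
        (2 * ν₁ t ^ 1 * deriv ν₁ t + 2 * ν₂ t ^ 1 * deriv ν₂ t) t := by
      exact ((d1.hasDerivAt.pow 2).add (d2.hasDerivAt.pow 2))
    have hconst : (fun s => ν₁ s ^ 2 + ν₂ s ^ 2) = fun _ => (1 : ℝ) := funext hunit
    rw [hconst] at hu
    have := hu.deriv
    simp at this
    nlinarith [this]
  constructor
  · rw [h1, h2]; linear_combination hleg t + lam * horth
  · rw [h1, h2, hβ t, hℓ t]; ring
end

section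
/- With the helicoidal surface z(t,θ) = (x(t)cos θ, x(t)sin θ, cθ + z(t)) generated by a frontal γ(t) = (x(t), z(t)) with ν(t) = (cos φ(t), sin φ(t)), the point (t,θ) is a singular point of z if and only if β(t) = 0 or ξ(t) = 0, where ξ(t) = √(c² sin²φ(t) + x(t)²) and β is such that γ'(t) = β(t)(-sin φ(t), cos φ(t)). -/
/-- `(t,θ)` is a singular point of the helicoidal surface
`z(t,θ) = (x(t)cos θ, x(t)sin θ, cθ + z(t))` (i.e. `z_t × z_θ = 0`)
iff `β(t) = 0` or `ξ(t) = 0`, where `ξ(t) = √(c²sin²φ(t) + x(t)²)`. -/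
theorem stmt_5
    (x z φ β ℓ ξ : ℝ → ℝ) (c : ℝ)
    (hx : Differentiable ℝ x) (hz : Differentiable ℝ z) (hφ : Differentiable ℝ φ)
    (hx' : ∀ t, deriv x t = -β t * Real.sin (φ t))
    (hz' : ∀ t, deriv z t = β t * Real.cos (φ t))
    (hφ' : ∀ t, deriv φ t = ℓ t)
    (hξ : ∀ t, ξ t = Real.sqrt (c ^ 2 * Real.sin (φ t) ^ 2 + x t ^ 2)) :
    ∀ t θ : ℝ,
      (deriv (fun s => x s * Real.sin θ) t * deriv (fun ϑ => c * ϑ + z t) θ -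
          deriv (fun s => c * θ + z s) t * deriv (fun ϑ => x t * Real.sin ϑ) θ = 0 ∧
        deriv (fun s => c * θ + z s) t * deriv (fun ϑ => x t * Real.cos ϑ) θ -
          deriv (fun s => x s * Real.cos θ) t * deriv (fun ϑ => c * ϑ + z t) θ = 0 ∧
        deriv (fun s => x s * Real.cos θ) t * deriv (fun ϑ => x t * Real.sin ϑ) θ -
          deriv (fun s => x s * Real.sin θ) t * deriv (fun ϑ => x t * Real.cos ϑ) θ = 0)
      ↔ (β t = 0 ∨ ξ t = 0) := by
  intro t θ
  have d1 : deriv (fun s => x s * Real.sin θ) t = deriv x t * Real.sin θ :=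
    deriv_mul_const (hx t) (Real.sin θ)
  have d2 : deriv (fun s => x s * Real.cos θ) t = deriv x t * Real.cos θ :=
    deriv_mul_const (hx t) (Real.cos θ)
  have d3 : deriv (fun s => c * θ + z s) t = deriv z t := by
    rw [deriv_const_add]
  have d4 : deriv (fun ϑ : ℝ => c * ϑ + z t) θ = c := by
    have h : HasDerivAt (fun ϑ : ℝ => c * ϑ + z t) (c * 1) θ :=
      ((hasDerivAt_id θ).const_mul c).add_const (z t)
    simpa using h.deriv
  have d5 : deriv (fun ϑ : ℝ => x t * Real.sin ϑ) θ = x t * Real.cos θ := by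
    simp [Real.deriv_sin]
  have d6 : deriv (fun ϑ : ℝ => x t * Real.cos ϑ) θ = x t * (-Real.sin θ) := by
    simp [Real.deriv_cos]
  rw [d1, d2, d3, d4, d5, d6, hx' t, hz' t]
  set b := β t
  set sφ := Real.sin (φ t)
  set cφ := Real.cos (φ t)
  set s := Real.sin θ
  set co := Real.cos θ
  have hsc : s ^ 2 + co ^ 2 = 1 := Real.sin_sq_add_cos_sq θ
  have hpc : sφ ^ 2 + cφ ^ 2 = 1 := Real.sin_sq_add_cos_sq (φ t)
  have hξ0 : ξ t = 0 ↔ c * sφ = 0 ∧ x t = 0 := by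
    rw [hξ t]
    rw [Real.sqrt_eq_zero (by positivity)]
    constructor
    · intro h
      constructor
      · nlinarith [sq_nonneg (c * sφ), sq_nonneg (x t)]
      · nlinarith [sq_nonneg (c * sφ), sq_nonneg (x t)]
    · rintro ⟨h1, h2⟩
      nlinarith [h1, h2]
  rw [hξ0]
  constructor
  · rintro ⟨h1, h2, h3⟩
    by_cases hb : b = 0
    · exact Or.inl hb
    · right
      have e1 : b * (c * sφ) = 0 := by
        linear_combination (-s) * h1 + co * h2 - (b * c * sφ) * hsc
      have e2 : b * (x t * cφ) = 0 := by
        linear_combination (-co) * h1 - s * h2 - (b * x t * cφ) * hsc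
      have e3 : b * (x t * sφ) = 0 := by
        linear_combination (-1 : ℝ) * h3 - (b * x t * sφ) * hsc
      have hcs : c * sφ = 0 := by
        rcases mul_eq_zero.1 e1 with h | h
        · exact absurd h hb
        · exact h
      have hx1 : x t * cφ = 0 := by
        rcases mul_eq_zero.1 e2 with h | h
        · exact absurd h hb
        · exact h
      have hx2 : x t * sφ = 0 := by
        rcases mul_eq_zero.1 e3 with h | h
        · exact absurd h hb
        · exact h
      refine ⟨hcs, ?_⟩
      have hsq : x t ^ 2 = 0 := by
        linear_combination (x t * sφ) * hx2 + (x t * cφ) * hx1 - (x t ^ 2) * hpc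
      exact pow_eq_zero_iff (two_ne_zero) |>.mp hsq
  · rintro (hb | ⟨hcs, hx0⟩)
    · refine ⟨?_, ?_, ?_⟩ <;> rw [hb] <;> ring
    · refine ⟨?_, ?_, ?_⟩
      · linear_combination (-b * s) * hcs - (b * cφ * co) * hx0
      · linear_combination (-b * cφ * s) * hx0 + (b * co) * hcs
      · linear_combination (-b * sφ * (co ^ 2 + s ^ 2)) * hx0
end

section
/- Let z(t,θ) = (x(t)cos θ, x(t)sin θ, cθ + z(t)) be the helicoidal surface of a frontal γ = (x, z) with ν = (cos φ, sin φ), with c ≠ 0 and ξ(t) = √(c² sin²φ(t) + x(t)²) ≠ 0 for all t. Then the vector field n(t,θ) = (1/ξ(t))(c sin φ(t) sin θ + x(t)cos φ(t)cos θ, -c sin φ(t)cos θ + x(t)cos φ(t)sin θ, x(t)sin φ(t)) is a unit vector field satisfying n·z_t = 0 and n·z_θ = 0; hence z is a frontal. -/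
/-!
Up to the factor `1/ξ`, the field is `N = (c sin φ sin θ + x cos φ cos θ, -c sin φ cos θ + x cos φ sin θ,
x sin φ)`. Two applications of `sin² + cos² = 1` give `|N|² = c² sin² φ + x² = ξ²`. Since `γ' = β ν^⊥`,
the surface has `z_t = β (-sin φ cos θ, -sin φ sin θ, cos φ)` and `z_θ = (-x sin θ, x cos θ, c)`, and
both are orthogonal to `N` by direct expansion.
-/

open Real

lemma helicoidNormal_normSq (c x φ θ : ℝ) :
    (c * sin φ * sin θ + x * cos φ * cos θ) ^ 2 +
        (-(c * sin φ) * cos θ + x * cos φ * sin θ) ^ 2 + (x * sin φ) ^ 2 =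
      c ^ 2 * sin φ ^ 2 + x ^ 2 := by
  linear_combination (c ^ 2 * sin φ ^ 2 + x ^ 2 * cos φ ^ 2) * sin_sq_add_cos_sq θ +
    x ^ 2 * sin_sq_add_cos_sq φ

lemma helicoidNormal_inner_profileDir (c x φ θ : ℝ) :
    (c * sin φ * sin θ + x * cos φ * cos θ) * (-sin φ * cos θ) +
        (-(c * sin φ) * cos θ + x * cos φ * sin θ) * (-sin φ * sin θ) + x * sin φ * cos φ = 0 := by
  linear_combination (-(x * sin φ * cos φ)) * sin_sq_add_cos_sq θ

lemma helicoidNormal_inner_rotationDir (c x φ θ : ℝ) :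
    (c * sin φ * sin θ + x * cos φ * cos θ) * (x * -sin θ) +
        (-(c * sin φ) * cos θ + x * cos φ * sin θ) * (x * cos θ) + x * sin φ * c = 0 := by
  linear_combination (-(c * x * sin φ)) * sin_sq_add_cos_sq θ

lemma div_sq_add_div_sq_add_div_sq_eq_one {a b d ξ : ℝ} (hξ : ξ ≠ 0)
    (h : a ^ 2 + b ^ 2 + d ^ 2 = ξ ^ 2) : (a / ξ) ^ 2 + (b / ξ) ^ 2 + (d / ξ) ^ 2 = 1 := by
  rw [div_pow, div_pow, div_pow, ← add_div, ← add_div, h, div_self (pow_ne_zero 2 hξ)]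

lemma div_mul_add_div_mul_add_div_mul_eq_zero {a b d u v w : ℝ} (ξ : ℝ)
    (h : a * u + b * v + d * w = 0) : a / ξ * u + b / ξ * v + d / ξ * w = 0 := by
  rw [div_mul_eq_mul_div, div_mul_eq_mul_div, div_mul_eq_mul_div, ← add_div, ← add_div, h,
    zero_div]

theorem stmt_7_general
    (x z φ β ξ : ℝ → ℝ) (c : ℝ)
    (hx' : ∀ t, deriv x t = -β t * Real.sin (φ t))
    (hz' : ∀ t, deriv z t = β t * Real.cos (φ t))
    (hξ : ∀ t, ξ t = Real.sqrt (c ^ 2 * Real.sin (φ t) ^ 2 + x t ^ 2))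
    (hξ0 : ∀ t, ξ t ≠ 0) :
    ∀ t θ : ℝ,
      (((c * Real.sin (φ t) * Real.sin θ + x t * Real.cos (φ t) * Real.cos θ) / ξ t) ^ 2 +
        ((-(c * Real.sin (φ t)) * Real.cos θ + x t * Real.cos (φ t) * Real.sin θ) / ξ t) ^ 2 +
        (x t * Real.sin (φ t) / ξ t) ^ 2 = 1) ∧
      (((c * Real.sin (φ t) * Real.sin θ + x t * Real.cos (φ t) * Real.cos θ) / ξ t) *
          deriv (fun s => x s * Real.cos θ) t +
        ((-(c * Real.sin (φ t)) * Real.cos θ + x t * Real.cos (φ t) * Real.sin θ) / ξ t) *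
          deriv (fun s => x s * Real.sin θ) t +
        (x t * Real.sin (φ t) / ξ t) * deriv (fun s => c * θ + z s) t = 0) ∧
      (((c * Real.sin (φ t) * Real.sin θ + x t * Real.cos (φ t) * Real.cos θ) / ξ t) *
          deriv (fun ϑ => x t * Real.cos ϑ) θ +
        ((-(c * Real.sin (φ t)) * Real.cos θ + x t * Real.cos (φ t) * Real.sin θ) / ξ t) *
          deriv (fun ϑ => x t * Real.sin ϑ) θ +
        (x t * Real.sin (φ t) / ξ t) * deriv (fun ϑ => c * ϑ + z t) θ = 0) := by
  intro t θ
  have hξsq : ξ t ^ 2 = c ^ 2 * sin (φ t) ^ 2 + x t ^ 2 := by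
    rw [hξ t, sq_sqrt (by positivity)]
  refine ⟨?unit, ?orth_t, ?orth_θ⟩
  case unit =>
    exact div_sq_add_div_sq_add_div_sq_eq_one (hξ0 t) ((helicoidNormal_normSq ..).trans hξsq.symm)
  case orth_t =>
    rw [deriv_mul_const_field, deriv_mul_const_field, deriv_const_add, hx', hz']
    apply div_mul_add_div_mul_add_div_mul_eq_zero
    linear_combination β t * helicoidNormal_inner_profileDir c (x t) (φ t) θ
  case orth_θ =>
    rw [deriv_const_mul_field, deriv_const_mul_field, deriv_add_const, Real.deriv_cos,
      Real.deriv_sin, deriv_const_mul_field, deriv_id'', mul_one]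
    exact div_mul_add_div_mul_add_div_mul_eq_zero _ (helicoidNormal_inner_rotationDir ..)

/-- For the helicoidal surface `z(t,θ) = (x(t)cos θ, x(t)sin θ, cθ + z(t))` with
`c ≠ 0` and `ξ(t) ≠ 0`, the field
`n = (1/ξ)(c sin φ sin θ + x cos φ cos θ, -c sin φ cos θ + x cos φ sin θ, x sin φ)`
is a unit vector field orthogonal to `z_t` and `z_θ`; hence `z` is a frontal. -/
theorem stmt_7
    (x z φ β ℓ ξ : ℝ → ℝ) (c : ℝ) (hc : c ≠ 0)
    (hx : Differentiable ℝ x) (hz : Differentiable ℝ z) (hφ : Differentiable ℝ φ)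
    (hx' : ∀ t, deriv x t = -β t * Real.sin (φ t))
    (hz' : ∀ t, deriv z t = β t * Real.cos (φ t))
    (hφ' : ∀ t, deriv φ t = ℓ t)
    (hξ : ∀ t, ξ t = Real.sqrt (c ^ 2 * Real.sin (φ t) ^ 2 + x t ^ 2))
    (hξ0 : ∀ t, ξ t ≠ 0) :
    ∀ t θ : ℝ,
      (((c * Real.sin (φ t) * Real.sin θ + x t * Real.cos (φ t) * Real.cos θ) / ξ t) ^ 2 +
        ((-(c * Real.sin (φ t)) * Real.cos θ + x t * Real.cos (φ t) * Real.sin θ) / ξ t) ^ 2 +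
        (x t * Real.sin (φ t) / ξ t) ^ 2 = 1) ∧
      (((c * Real.sin (φ t) * Real.sin θ + x t * Real.cos (φ t) * Real.cos θ) / ξ t) *
          deriv (fun s => x s * Real.cos θ) t +
        ((-(c * Real.sin (φ t)) * Real.cos θ + x t * Real.cos (φ t) * Real.sin θ) / ξ t) *
          deriv (fun s => x s * Real.sin θ) t +
        (x t * Real.sin (φ t) / ξ t) * deriv (fun s => c * θ + z s) t = 0) ∧
      (((c * Real.sin (φ t) * Real.sin θ + x t * Real.cos (φ t) * Real.cos θ) / ξ t) *
          deriv (fun ϑ => x t * Real.cos ϑ) θ +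
        ((-(c * Real.sin (φ t)) * Real.cos θ + x t * Real.cos (φ t) * Real.sin θ) / ξ t) *
          deriv (fun ϑ => x t * Real.sin ϑ) θ +
        (x t * Real.sin (φ t) / ξ t) * deriv (fun ϑ => c * ϑ + z t) θ = 0) :=
  stmt_7_general x z φ β ξ c hx' hz' hξ hξ0
end

section
/- Let z be the helicoidal surface around the z-axis with slant c = 0 (a surface of revolution) generated by a frontal γ = (x, z) with ν = (cos φ, sin φ) and curvature (ℓ, β). Then the Legendre surface (z, n), with n(t,θ) = (cos φ(t)cos θ, cos φ(t)sin θ, sin φ(t)), is a Legendre immersion (i.e., z is a front) if and only if (ℓ(t), β(t)) ≠ (0,0) and (x(t), cos φ(t)) ≠ (0,0) for all t. -/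
/-- For the surface of revolution (`c = 0`) generated by a frontal `γ = (x,z)` with
normal `ν = (cos φ, sin φ)`, the Legendre surface `(z, n)` with
`n(t,θ) = (cos φ cos θ, cos φ sin θ, sin φ)` is a Legendre immersion (i.e. `z` is a
front) iff `(ℓ(t), β(t)) ≠ (0,0)` and `(x(t), cos φ(t)) ≠ (0,0)` for all `t`. -/
theorem stmt_8
    (x z φ β ℓ : ℝ → ℝ)
    (hx : ContDiff ℝ (⊤ : ℕ∞) x) (hz : ContDiff ℝ (⊤ : ℕ∞) z) (hφ : ContDiff ℝ (⊤ : ℕ∞) φ)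
    (hx' : ∀ t, deriv x t = -β t * Real.sin (φ t))
    (hz' : ∀ t, deriv z t = β t * Real.cos (φ t))
    (hφ' : ∀ t, deriv φ t = ℓ t) :
    (∀ t θ : ℝ,
      LinearIndependent ℝ
        ![(![deriv (fun s => x s * Real.cos θ) t,
             deriv (fun s => x s * Real.sin θ) t,
             deriv z t,
             deriv (fun s => Real.cos (φ s) * Real.cos θ) t,
             deriv (fun s => Real.cos (φ s) * Real.sin θ) t,
             deriv (fun s => Real.sin (φ s)) t] : Fin 6 → ℝ),
          (![deriv (fun ϑ => x t * Real.cos ϑ) θ,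
             deriv (fun ϑ => x t * Real.sin ϑ) θ,
             0,
             deriv (fun ϑ => Real.cos (φ t) * Real.cos ϑ) θ,
             deriv (fun ϑ => Real.cos (φ t) * Real.sin ϑ) θ,
             0] : Fin 6 → ℝ)])
    ↔ (∀ t : ℝ, (ℓ t, β t) ≠ (0, 0) ∧ (x t, Real.cos (φ t)) ≠ (0, 0)) := by
  have hxd : ∀ t, HasDerivAt x (-β t * Real.sin (φ t)) t := fun t =>
    hx' t ▸ (hx.differentiable (by simp) t).hasDerivAt
  have hφd : ∀ t, HasDerivAt φ (ℓ t) t := fun t =>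
    hφ' t ▸ (hφ.differentiable (by simp) t).hasDerivAt
  have d1 : ∀ t θ : ℝ, deriv (fun s => x s * Real.cos θ) t
      = -β t * Real.sin (φ t) * Real.cos θ := fun t θ => ((hxd t).mul_const _).deriv
  have d2 : ∀ t θ : ℝ, deriv (fun s => x s * Real.sin θ) t
      = -β t * Real.sin (φ t) * Real.sin θ := fun t θ => ((hxd t).mul_const _).deriv
  have d4 : ∀ t θ : ℝ, deriv (fun s => Real.cos (φ s) * Real.cos θ) t
      = -Real.sin (φ t) * ℓ t * Real.cos θ := fun t θ =>
    ((((Real.hasDerivAt_cos (φ t)).comp t (hφd t))).mul_const _).deriv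
  have d5 : ∀ t θ : ℝ, deriv (fun s => Real.cos (φ s) * Real.sin θ) t
      = -Real.sin (φ t) * ℓ t * Real.sin θ := fun t θ =>
    ((((Real.hasDerivAt_cos (φ t)).comp t (hφd t))).mul_const _).deriv
  have d6 : ∀ t : ℝ, deriv (fun s => Real.sin (φ s)) t
      = Real.cos (φ t) * ℓ t := fun t =>
    (((Real.hasDerivAt_sin (φ t)).comp t (hφd t))).deriv
  have e1 : ∀ t θ : ℝ, deriv (fun ϑ => x t * Real.cos ϑ) θ
      = x t * (-Real.sin θ) := fun t θ => ((Real.hasDerivAt_cos θ).const_mul (x t)).deriv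
  have e2 : ∀ t θ : ℝ, deriv (fun ϑ => x t * Real.sin ϑ) θ
      = x t * Real.cos θ := fun t θ => ((Real.hasDerivAt_sin θ).const_mul (x t)).deriv
  have e4 : ∀ t θ : ℝ, deriv (fun ϑ => Real.cos (φ t) * Real.cos ϑ) θ
      = Real.cos (φ t) * (-Real.sin θ) := fun t θ =>
    ((Real.hasDerivAt_cos θ).const_mul (Real.cos (φ t))).deriv
  have e5 : ∀ t θ : ℝ, deriv (fun ϑ => Real.cos (φ t) * Real.sin ϑ) θ
      = Real.cos (φ t) * Real.cos θ := fun t θ =>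
    ((Real.hasDerivAt_sin θ).const_mul (Real.cos (φ t))).deriv
  have dcos : ∀ t : ℝ, deriv (fun s => Real.cos (φ s)) t
      = -Real.sin (φ t) * ℓ t := fun t =>
    (((Real.hasDerivAt_cos (φ t)).comp t (hφd t))).deriv
  constructor
  · intro h t
    constructor
    · intro hc
      have hℓ : ℓ t = 0 := (Prod.mk.injEq _ _ _ _ ▸ hc).1
      have hβ : β t = 0 := (Prod.mk.injEq _ _ _ _ ▸ hc).2
      apply (h t 0).ne_zero 0
      funext i
      fin_cases i <;>
        simp [Matrix.cons_val_succ, d1, d2, d4, d5, d6, dcos, hx', hz', hℓ, hβ] <;> try rfl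
    · intro hc
      have hxt : x t = 0 := (Prod.mk.injEq _ _ _ _ ▸ hc).1
      have hct : Real.cos (φ t) = 0 := (Prod.mk.injEq _ _ _ _ ▸ hc).2
      apply (h t 0).ne_zero 1
      funext i
      fin_cases i <;>
        simp [Matrix.cons_val_succ, e1, e2, e4, e5, hxt, hct] <;> try rfl
  · intro h t θ
    obtain ⟨h1, h2⟩ := h t
    rw [d1, d2, hz', d4, d5, d6, e1, e2, e4, e5, LinearIndependent.pair_iff]
    intro a b hab
    have E0 : a * (-β t * Real.sin (φ t) * Real.cos θ) + b * (x t * -Real.sin θ) = 0 :=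
      congrFun hab 0
    have E1 : a * (-β t * Real.sin (φ t) * Real.sin θ) + b * (x t * Real.cos θ) = 0 :=
      congrFun hab 1
    have E2 : a * (β t * Real.cos (φ t)) + b * 0 = 0 := congrFun hab 2
    have E3 : a * (-Real.sin (φ t) * ℓ t * Real.cos θ)
        + b * (Real.cos (φ t) * -Real.sin θ) = 0 := congrFun hab 3
    have E4 : a * (-Real.sin (φ t) * ℓ t * Real.sin θ)
        + b * (Real.cos (φ t) * Real.cos θ) = 0 := congrFun hab 4
    have E5 : a * (Real.cos (φ t) * ℓ t) + b * 0 = 0 := congrFun hab 5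
    have pyth := Real.sin_sq_add_cos_sq θ
    have pythφ := Real.sin_sq_add_cos_sq (φ t)
    have k1 : a * (β t * Real.sin (φ t)) = 0 := by
      linear_combination (-Real.cos θ) * E0 + (-Real.sin θ) * E1
        - a * β t * Real.sin (φ t) * pyth
    have k2 : b * x t = 0 := by
      linear_combination (-Real.sin θ) * E0 + Real.cos θ * E1 - b * x t * pyth
    have k3 : a * (ℓ t * Real.sin (φ t)) = 0 := by
      linear_combination (-Real.cos θ) * E3 + (-Real.sin θ) * E4
        - a * ℓ t * Real.sin (φ t) * pyth
    have k4 : b * Real.cos (φ t) = 0 := by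
      linear_combination (-Real.sin θ) * E3 + Real.cos θ * E4 - b * Real.cos (φ t) * pyth
    have kβ : a * β t = 0 := by
      have hsq : (a * β t) ^ 2 = 0 := by
        linear_combination (a * β t * Real.sin (φ t)) * k1
          + (a * β t * Real.cos (φ t)) * E2 - (a * β t) ^ 2 * pythφ
      exact pow_eq_zero_iff (two_ne_zero) |>.mp hsq
    have kℓ : a * ℓ t = 0 := by
      have hsq : (a * ℓ t) ^ 2 = 0 := by
        linear_combination (a * ℓ t * Real.sin (φ t)) * k3
          + (a * ℓ t * Real.cos (φ t)) * E5 - (a * ℓ t) ^ 2 * pythφ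
      exact pow_eq_zero_iff (two_ne_zero) |>.mp hsq
    constructor
    · by_contra ha
      exact h1 (Prod.ext ((mul_eq_zero.mp kℓ).resolve_left ha)
        ((mul_eq_zero.mp kβ).resolve_left ha))
    · by_contra hb
      exact h2 (Prod.ext ((mul_eq_zero.mp k2).resolve_left hb)
        ((mul_eq_zero.mp k4).resolve_left hb))
end

section
/- Let (z, n, s): U → ℝ³ × Δ be a framed surface, where Δ = {(a,b) ∈ S² × S² : a·b = 0}, with basic invariants a₁, b₁, a₂, b₂ defined by z_t = a₁s + b₁t, z_θ = a₂s + b₂t, where t = n × s. For the helicoidal surface z(t,θ) = (x(t)cos θ, x(t)sin θ, cθ + z(t)) with n as in equation (nuz) and s(t,θ) = (1/ξ(t))(-c sin φ cos φ cos θ + x sin θ, -c sin φ cos φ sin θ - x cos θ, -c sin²φ), the invariants are a₁ = 0, b₁ = -β(t), a₂ = -ξ(t), b₂ = -c cos φ(t), where ξ(t) = √(c² sin²φ(t) + x(t)²). -/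
/-- Normal `n` of the helicoidal framed surface. -/
noncomputable def N1 (c : ℝ) (x φ ξ : ℝ → ℝ) (t θ : ℝ) : ℝ :=
  (c * Real.sin (φ t) * Real.sin θ + x t * Real.cos (φ t) * Real.cos θ) / ξ t
noncomputable def N2 (c : ℝ) (x φ ξ : ℝ → ℝ) (t θ : ℝ) : ℝ :=
  (-(c * Real.sin (φ t)) * Real.cos θ + x t * Real.cos (φ t) * Real.sin θ) / ξ t
noncomputable def N3 (c : ℝ) (x φ ξ : ℝ → ℝ) (t _θ : ℝ) : ℝ :=
  x t * Real.sin (φ t) / ξ t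

/-- The field `s` of the helicoidal framed surface. -/
noncomputable def S1 (c : ℝ) (x φ ξ : ℝ → ℝ) (t θ : ℝ) : ℝ :=
  (-(c * Real.sin (φ t) * Real.cos (φ t)) * Real.cos θ + x t * Real.sin θ) / ξ t
noncomputable def S2 (c : ℝ) (x φ ξ : ℝ → ℝ) (t θ : ℝ) : ℝ :=
  (-(c * Real.sin (φ t) * Real.cos (φ t)) * Real.sin θ - x t * Real.cos θ) / ξ t
noncomputable def S3 (c : ℝ) (x φ ξ : ℝ → ℝ) (t _θ : ℝ) : ℝ :=
  -(c * Real.sin (φ t) ^ 2) / ξ t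

/-- `t = n × s`. -/
noncomputable def T1 (c : ℝ) (x φ ξ : ℝ → ℝ) (t θ : ℝ) : ℝ :=
  N2 c x φ ξ t θ * S3 c x φ ξ t θ - N3 c x φ ξ t θ * S2 c x φ ξ t θ
noncomputable def T2 (c : ℝ) (x φ ξ : ℝ → ℝ) (t θ : ℝ) : ℝ :=
  N3 c x φ ξ t θ * S1 c x φ ξ t θ - N1 c x φ ξ t θ * S3 c x φ ξ t θ
noncomputable def T3 (c : ℝ) (x φ ξ : ℝ → ℝ) (t θ : ℝ) : ℝ :=
  N1 c x φ ξ t θ * S2 c x φ ξ t θ - N2 c x φ ξ t θ * S1 c x φ ξ t θ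

/-!
Since `ξ² = c² sin² φ + x²`, the frame vector `t = n × s` simplifies to
`(sin φ cos θ, sin φ sin θ, -cos φ)`. The profile curve moves with velocity `β (-sin φ, cos φ)`,
so `z_t = -β t`, which gives `a₁ = 0` and `b₁ = -β`. Along the rulings
`z_θ = (-x sin θ, x cos θ, c)`, whose product with `s` is `-(x² + c² sin² φ) / ξ = -ξ`.
-/

open Real

section HelicoidalFrame

variable {c : ℝ} {x φ ξ : ℝ → ℝ} {t : ℝ} (θ : ℝ)

theorem T1_eq (hξ : ξ t ^ 2 = c ^ 2 * sin (φ t) ^ 2 + x t ^ 2) (hξ0 : ξ t ≠ 0) :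
    T1 c x φ ξ t θ = sin (φ t) * cos θ := by
  simp only [T1, N2, N3, S2, S3]
  field_simp
  linear_combination (-(sin (φ t) * cos θ)) * hξ

theorem T2_eq (hξ : ξ t ^ 2 = c ^ 2 * sin (φ t) ^ 2 + x t ^ 2) (hξ0 : ξ t ≠ 0) :
    T2 c x φ ξ t θ = sin (φ t) * sin θ := by
  simp only [T2, N1, N3, S1, S3]
  field_simp
  linear_combination (-(sin (φ t) * sin θ)) * hξ

theorem T3_eq (hξ : ξ t ^ 2 = c ^ 2 * sin (φ t) ^ 2 + x t ^ 2) (hξ0 : ξ t ≠ 0) :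
    T3 c x φ ξ t θ = -cos (φ t) := by
  simp only [T3, N1, N2, S1, S2]
  field_simp
  linear_combination cos (φ t) * hξ +
    (-(c ^ 2 * sin (φ t) ^ 2 * cos (φ t) + x t ^ 2 * cos (φ t))) * sin_sq_add_cos_sq θ

theorem velocity_dot_S_eq_zero (b : ℝ) :
    -b * sin (φ t) * cos θ * S1 c x φ ξ t θ + -b * sin (φ t) * sin θ * S2 c x φ ξ t θ +
      b * cos (φ t) * S3 c x φ ξ t θ = 0 := by
  simp only [S1, S2, S3]
  linear_combination (b * c * sin (φ t) ^ 2 * cos (φ t) / ξ t) * sin_sq_add_cos_sq θ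

theorem velocity_dot_T (b : ℝ) (hξ : ξ t ^ 2 = c ^ 2 * sin (φ t) ^ 2 + x t ^ 2)
    (hξ0 : ξ t ≠ 0) :
    -b * sin (φ t) * cos θ * T1 c x φ ξ t θ + -b * sin (φ t) * sin θ * T2 c x φ ξ t θ +
      b * cos (φ t) * T3 c x φ ξ t θ = -b := by
  rw [T1_eq θ hξ hξ0, T2_eq θ hξ hξ0, T3_eq θ hξ hξ0]
  linear_combination (-b * sin (φ t) ^ 2) * sin_sq_add_cos_sq θ + (-b) * sin_sq_add_cos_sq (φ t)

theorem ruling_dot_S (hξ : ξ t ^ 2 = c ^ 2 * sin (φ t) ^ 2 + x t ^ 2) (hξ0 : ξ t ≠ 0) :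
    -(x t * sin θ) * S1 c x φ ξ t θ + x t * cos θ * S2 c x φ ξ t θ + c * S3 c x φ ξ t θ =
      -ξ t := by
  simp only [S1, S2, S3]
  field_simp
  linear_combination hξ + (-(x t ^ 2)) * sin_sq_add_cos_sq θ

theorem ruling_dot_T (hξ : ξ t ^ 2 = c ^ 2 * sin (φ t) ^ 2 + x t ^ 2) (hξ0 : ξ t ≠ 0) :
    -(x t * sin θ) * T1 c x φ ξ t θ + x t * cos θ * T2 c x φ ξ t θ + c * T3 c x φ ξ t θ =
      -(c * cos (φ t)) := by
  rw [T1_eq θ hξ hξ0, T2_eq θ hξ hξ0, T3_eq θ hξ hξ0]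
  ring

end HelicoidalFrame

theorem stmt_9_general
    (x z φ β ξ : ℝ → ℝ) (c : ℝ)
    (hx' : ∀ t, deriv x t = -β t * Real.sin (φ t))
    (hz' : ∀ t, deriv z t = β t * Real.cos (φ t))
    (hξ : ∀ t, ξ t = Real.sqrt (c ^ 2 * Real.sin (φ t) ^ 2 + x t ^ 2))
    (hξ0 : ∀ t, ξ t ≠ 0) :
    ∀ t θ : ℝ,
      (deriv (fun s => x s * Real.cos θ) t * S1 c x φ ξ t θ +
        deriv (fun s => x s * Real.sin θ) t * S2 c x φ ξ t θ +
        deriv (fun s => c * θ + z s) t * S3 c x φ ξ t θ = 0) ∧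
      (deriv (fun s => x s * Real.cos θ) t * T1 c x φ ξ t θ +
        deriv (fun s => x s * Real.sin θ) t * T2 c x φ ξ t θ +
        deriv (fun s => c * θ + z s) t * T3 c x φ ξ t θ = -β t) ∧
      (deriv (fun ϑ => x t * Real.cos ϑ) θ * S1 c x φ ξ t θ +
        deriv (fun ϑ => x t * Real.sin ϑ) θ * S2 c x φ ξ t θ +
        deriv (fun ϑ => c * ϑ + z t) θ * S3 c x φ ξ t θ = -ξ t) ∧
      (deriv (fun ϑ => x t * Real.cos ϑ) θ * T1 c x φ ξ t θ +
        deriv (fun ϑ => x t * Real.sin ϑ) θ * T2 c x φ ξ t θ +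
        deriv (fun ϑ => c * ϑ + z t) θ * T3 c x φ ξ t θ = -(c * Real.cos (φ t))) := by
  intro t θ
  have hξ_sq : ξ t ^ 2 = c ^ 2 * sin (φ t) ^ 2 + x t ^ 2 := by
    rw [hξ t, sq_sqrt (by positivity)]
  simp only [deriv_mul_const_field, deriv_const_add, hx', hz', deriv_const_mul_field,
    deriv_cos', Real.deriv_sin, deriv_add_const, deriv_const_mul_id, mul_neg]
  exact ⟨velocity_dot_S_eq_zero θ (β t), velocity_dot_T θ (β t) hξ_sq (hξ0 t),
    ruling_dot_S θ hξ_sq (hξ0 t), ruling_dot_T θ hξ_sq (hξ0 t)⟩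

/-- Basic invariants of the helicoidal framed surface `(z, n, s)`:
`a₁ = z_t·s = 0`, `b₁ = z_t·t = -β`, `a₂ = z_θ·s = -ξ`, `b₂ = z_θ·t = -c cos φ`. -/
theorem stmt_9
    (x z φ β ℓ ξ : ℝ → ℝ) (c : ℝ)
    (hx : Differentiable ℝ x) (hz : Differentiable ℝ z) (hφ : Differentiable ℝ φ)
    (hx' : ∀ t, deriv x t = -β t * Real.sin (φ t))
    (hz' : ∀ t, deriv z t = β t * Real.cos (φ t))
    (hφ' : ∀ t, deriv φ t = ℓ t)
    (hξ : ∀ t, ξ t = Real.sqrt (c ^ 2 * Real.sin (φ t) ^ 2 + x t ^ 2))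
    (hξ0 : ∀ t, ξ t ≠ 0) :
    ∀ t θ : ℝ,
      (deriv (fun s => x s * Real.cos θ) t * S1 c x φ ξ t θ +
        deriv (fun s => x s * Real.sin θ) t * S2 c x φ ξ t θ +
        deriv (fun s => c * θ + z s) t * S3 c x φ ξ t θ = 0) ∧
      (deriv (fun s => x s * Real.cos θ) t * T1 c x φ ξ t θ +
        deriv (fun s => x s * Real.sin θ) t * T2 c x φ ξ t θ +
        deriv (fun s => c * θ + z s) t * T3 c x φ ξ t θ = -β t) ∧
      (deriv (fun ϑ => x t * Real.cos ϑ) θ * S1 c x φ ξ t θ +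
        deriv (fun ϑ => x t * Real.sin ϑ) θ * S2 c x φ ξ t θ +
        deriv (fun ϑ => c * ϑ + z t) θ * S3 c x φ ξ t θ = -ξ t) ∧
      (deriv (fun ϑ => x t * Real.cos ϑ) θ * T1 c x φ ξ t θ +
        deriv (fun ϑ => x t * Real.sin ϑ) θ * T2 c x φ ξ t θ +
        deriv (fun ϑ => c * ϑ + z t) θ * T3 c x φ ξ t θ = -(c * Real.cos (φ t))) :=
  stmt_9_general x z φ β ξ c hx' hz' hξ hξ0
end

section
/- For the helicoidal framed surface (z, n, s) with curvature (J_F, K_F, H_F) as above, C_F(t) = (0,0,0) if and only if (β(t) = 0 and ℓ(t) = 0) or (β(t) = 0 and x(t) = 0). Consequently, (z, n) fails to be a Legendre immersion at (t,θ) exactly when the profile curve is not a front at t or is singular at a point on the axis. -/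
/-- `C_F(t) = 0` iff (`β(t) = 0` and `ℓ(t) = 0`) or (`β(t) = 0` and `x(t) = 0`):
the Legendre surface `(z, n)` fails to be an immersion exactly when the profile
curve is not a front at `t` or is singular on the axis. -/
theorem stmt_11
    (x z φ β ℓ ξ : ℝ → ℝ) (c : ℝ)
    (hξ : ∀ t, ξ t = Real.sqrt (c ^ 2 * Real.sin (φ t) ^ 2 + x t ^ 2))
    (hξ0 : ∀ t, ξ t ≠ 0) :
    ∀ t : ℝ,
      (-(β t * ξ t) = 0 ∧
        (c ^ 2 * β t * Real.sin (φ t) ^ 4 - x t ^ 3 * ℓ t * Real.cos (φ t)) / ξ t ^ 3 = 0 ∧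
        (β t * (ξ t ^ 2 + c ^ 2 * Real.sin (φ t) ^ 2) * Real.cos (φ t) +
            x t * ℓ t * (c ^ 2 + x t ^ 2)) / (2 * ξ t ^ 2) = 0)
      ↔ ((β t = 0 ∧ ℓ t = 0) ∨ (β t = 0 ∧ x t = 0)) := by
  intro t
  have hξ2 : ξ t ^ 2 = c ^ 2 * Real.sin (φ t) ^ 2 + x t ^ 2 := by
    rw [hξ]
    exact Real.sq_sqrt (by positivity)
  have hξpos : 0 < ξ t ^ 2 := pow_pos (abs_pos.mpr (hξ0 t)) 2 |>.trans_eq (by rw [sq_abs])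
  have hc : 0 < c ^ 2 + x t ^ 2 := by
    nlinarith [Real.sin_sq_le_one (φ t), sq_nonneg c]
  constructor
  · rintro ⟨h1, h2, h3⟩
    have hβ : β t = 0 := by
      have := hξ0 t
      have h1' : β t * ξ t = 0 := by linarith [neg_eq_zero.mp h1]
      rcases mul_eq_zero.mp h1' with h | h
      · exact h
      · exact absurd h this
    rw [div_eq_zero_iff] at h3
    rcases h3 with h3 | h3
    · rw [hβ] at h3
      have hxl : x t * ℓ t = 0 := by
        have := hc
        nlinarith
      rcases mul_eq_zero.mp hxl with h | h
      · exact Or.inr ⟨hβ, h⟩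
      · exact Or.inl ⟨hβ, h⟩
    · exfalso; nlinarith
  · rintro (⟨hβ, hℓ⟩ | ⟨hβ, hx⟩)
    · simp [hβ, hℓ]
    · simp [hβ, hx]
end

section
/- Let z(t,θ) = (x(t)cos θ, x(t)sin θ, cθ + z(t)) be the helicoidal surface of a frontal γ with unit normal n(t,θ) as in equation (nuz), with ξ(t) ≠ 0 for all t, and let λ ∈ ℝ. Then the parallel surface z^λ(t,θ) = z(t,θ) + λn(t,θ) equals (x₁(t)cos θ - x₂(t)sin θ, x₁(t)sin θ + x₂(t)cos θ, cθ + x₃(t)), where x₁(t) = x(t)(1 + λcos φ(t)/ξ(t)), x₂(t) = -cλ sin φ(t)/ξ(t), x₃(t) = z(t) + λx(t)sin φ(t)/ξ(t); in particular z^λ is a helicoidal surface around the z-axis with slant c generated by the space curve (x₁, x₂, x₃). -/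
/-- The parallel surface `z^λ = z + λn` of the helicoidal surface is the helicoidal
surface (around the z-axis, slant `c`) generated by the space curve
`(x₁, x₂, x₃)` with `x₁ = x(1 + λcos φ/ξ)`, `x₂ = -cλ sin φ/ξ`,
`x₃ = z + λx sin φ/ξ`. -/
theorem stmt_12
    (x z φ ξ x₁ x₂ x₃ : ℝ → ℝ) (c lam : ℝ)
    (hξ : ∀ t, ξ t = Real.sqrt (c ^ 2 * Real.sin (φ t) ^ 2 + x t ^ 2))
    (hξ0 : ∀ t, ξ t ≠ 0)
    (hx₁ : ∀ t, x₁ t = x t * (1 + lam * Real.cos (φ t) / ξ t))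
    (hx₂ : ∀ t, x₂ t = -(c * lam * Real.sin (φ t)) / ξ t)
    (hx₃ : ∀ t, x₃ t = z t + lam * x t * Real.sin (φ t) / ξ t) :
    ∀ t θ : ℝ,
      (x t * Real.cos θ +
          lam * ((c * Real.sin (φ t) * Real.sin θ + x t * Real.cos (φ t) * Real.cos θ) / ξ t)
        = x₁ t * Real.cos θ - x₂ t * Real.sin θ) ∧
      (x t * Real.sin θ +
          lam * ((-(c * Real.sin (φ t)) * Real.cos θ + x t * Real.cos (φ t) * Real.sin θ) / ξ t)
        = x₁ t * Real.sin θ + x₂ t * Real.cos θ) ∧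
      ((c * θ + z t) + lam * (x t * Real.sin (φ t) / ξ t) = c * θ + x₃ t) := by
  intro t θ
  have h0 := hξ0 t
  rw [hx₁ t, hx₂ t, hx₃ t]; refine ⟨?_, ?_, ?_⟩ <;> field_simp <;> ring
end

section
/- Let z(t,θ) = (x(t)cos θ, x(t)sin θ, z(t)) be a surface of revolution (c = 0) with x(t) ≠ 0, generated by a Legendre immersion with curvature (ℓ, β), ℓ(t) ≠ 0, cos φ(t) ≠ 0. Then the solutions of K_F(t)λ² - 2H_F(t)λ + J_F(t) = 0 are λ₁(t) = -εβ(t)/ℓ(t) and λ₂(t) = -εx(t)/cos φ(t), where ε = sgn(x(t)); moreover, with λ = λ₁, the plane profile curve of the focal surface coincides with the evolute E_γ(t) = γ(t) - (β(t)/ℓ(t))ν(t) of γ. -/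
/-- For a surface of revolution (`c = 0`) with `x ≠ 0`, `ℓ ≠ 0`, `cos φ ≠ 0`, the
solutions of `K_F λ² - 2H_F λ + J_F = 0` are `λ₁ = -εβ/ℓ` and `λ₂ = -εx/cos φ`
(`ε = sgn x`); and for `λ = λ₁` the plane profile curve of the focal surface is the
evolute `E_γ = γ - (β/ℓ)ν` of `γ`. -/
theorem stmt_18
    (x z φ β ℓ JF KF HF : ℝ → ℝ)
    (hx : ∀ t, x t ≠ 0) (hℓ : ∀ t, ℓ t ≠ 0) (hcos : ∀ t, Real.cos (φ t) ≠ 0)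
    (hJF : ∀ t, JF t = -(β t * |x t|))
    (hKF : ∀ t, KF t = -(x t ^ 3 * ℓ t * Real.cos (φ t)) / |x t| ^ 3)
    (hHF : ∀ t, HF t = (β t * x t ^ 2 * Real.cos (φ t) + x t ^ 3 * ℓ t) / (2 * x t ^ 2)) :
    ∀ t : ℝ,
      (∀ lam : ℝ,
        KF t * lam ^ 2 - 2 * HF t * lam + JF t = 0 ↔
          lam = -(Real.sign (x t) * β t) / ℓ t ∨
          lam = -(Real.sign (x t) * x t) / Real.cos (φ t)) ∧
      (x t * (1 + (-(Real.sign (x t) * β t) / ℓ t) * Real.cos (φ t) / |x t|)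
          = x t - (β t / ℓ t) * Real.cos (φ t)) ∧
      (z t + (-(Real.sign (x t) * β t) / ℓ t) * x t * Real.sin (φ t) / |x t|
          = z t - (β t / ℓ t) * Real.sin (φ t)) := by
  intro t
  have hx' := hx t; have hℓ' := hℓ t; have hc' := hcos t
  have hHF' : HF t = (β t * Real.cos (φ t) + x t * ℓ t) / 2 := by
    rw [hHF]; field_simp
  rcases lt_or_gt_of_ne hx' with hneg | hpos
  · rw [Real.sign_of_neg hneg]
    have habs : |x t| = -(x t) := abs_of_neg hneg
    have hJF' : JF t = β t * x t := by rw [hJF, habs]; ring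
    have hKF' : KF t = ℓ t * Real.cos (φ t) := by
      rw [hKF, habs, div_eq_iff (pow_ne_zero 3 (neg_ne_zero.2 hx'))]; ring
    refine ⟨fun lam => ?_, ?_, ?_⟩
    · rw [hJF', hKF', hHF']
      constructor
      · intro h
        have h2 : (ℓ t * lam - β t) * (Real.cos (φ t) * lam - x t) = 0 := by
          linear_combination h
        rcases mul_eq_zero.1 h2 with h3 | h3
        · left; field_simp; linarith
        · right; field_simp; linarith
      · rintro (rfl | rfl) <;> field_simp <;> ring
    · rw [habs]; field_simp; ring
    · rw [habs]; field_simp; ring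
  · rw [Real.sign_of_pos hpos]
    have habs : |x t| = x t := abs_of_pos hpos
    have hJF' : JF t = -(β t * x t) := by rw [hJF, habs]
    have hKF' : KF t = -(ℓ t * Real.cos (φ t)) := by
      rw [hKF, habs, div_eq_iff (pow_ne_zero 3 hx')]; ring
    refine ⟨fun lam => ?_, ?_, ?_⟩
    · rw [hJF', hKF', hHF']
      constructor
      · intro h
        have h2 : (ℓ t * lam + β t) * (Real.cos (φ t) * lam + x t) = 0 := by
          linear_combination -h
        rcases mul_eq_zero.1 h2 with h3 | h3
        · left; field_simp; linarith
        · right; field_simp; linarith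
      · rintro (rfl | rfl) <;> field_simp <;> ring
    · rw [habs]; field_simp; ring
    · rw [habs]; field_simp; ring
end

section
/- Let z be the helicoidal surface z(t,θ) = (x(t)cos θ, x(t)sin θ, cθ + z(t)) generated by a frontal γ with curvature (ℓ, β), where β(t) = t^m·β̄(t), β̄(0) ≠ 0, m ≥ 1, and ξ(0) ≠ 0. Suppose γ is a front at 0 with x(0) = 0. Then both the Gaussian curvature K(t) = K_F(t)/J_F(t) and the mean curvature H(t) = H_F(t)/J_F(t) remain bounded as t → 0. (Key step: since x'(t) = -β(t)sin φ(t) = O(t^m) and x(0) = 0, one has x(t) = O(t^{m+1}), hence x(t)ℓ(t)(x(t)² + c²) = O(t^m) and x(t)³ℓ(t)cos φ(t) = O(t^m).) -/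
set_option maxHeartbeats 1000000 in
/-- If the profile curve is a front at its singular point `t = 0` of order `m`
(`β(t) = t^m β̄(t)`, `β̄(0) ≠ 0`) and meets the axis there (`x(0) = 0`), then both
the Gaussian curvature `K = K_F/J_F` and the mean curvature `H = H_F/J_F` of the
helicoidal surface remain bounded near `t = 0`. -/
theorem stmt_19
    (x z φ ℓ βb β ξ : ℝ → ℝ) (c : ℝ) (m : ℕ) (hm : 1 ≤ m)
    (hx : ContDiff ℝ (⊤ : ℕ∞) x) (hz : ContDiff ℝ (⊤ : ℕ∞) z) (hφ : ContDiff ℝ (⊤ : ℕ∞) φ)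
    (hβb : ContDiff ℝ (⊤ : ℕ∞) βb)
    (hβ : ∀ t, β t = t ^ m * βb t) (hβb0 : βb 0 ≠ 0)
    (hx' : ∀ t, deriv x t = -β t * Real.sin (φ t))
    (hz' : ∀ t, deriv z t = β t * Real.cos (φ t))
    (hφ' : ∀ t, deriv φ t = ℓ t)
    (hξ : ∀ t, ξ t = Real.sqrt (c ^ 2 * Real.sin (φ t) ^ 2 + x t ^ 2))
    (hξ0 : ξ 0 ≠ 0)
    (hfront : (ℓ 0, β 0) ≠ (0, 0))
    (hx0 : x 0 = 0) :
    ∃ C δ : ℝ, 0 < δ ∧ ∀ t : ℝ, t ≠ 0 → |t| < δ →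
      |(c ^ 2 * β t * Real.sin (φ t) ^ 4 - x t ^ 3 * ℓ t * Real.cos (φ t)) /
          (β t * ξ t ^ 4)| ≤ C ∧
      |(β t * Real.cos (φ t) * (ξ t ^ 2 + c ^ 2 * Real.sin (φ t) ^ 2) +
            x t * ℓ t * (x t ^ 2 + c ^ 2)) / (2 * β t * ξ t ^ 3)| ≤ C := by
  -- ℓ is continuous
  have hℓeq : ℓ = deriv φ := funext fun t => (hφ' t).symm
  have hℓc : Continuous ℓ := hℓeq ▸ hφ.continuous_deriv (by simp)
  -- ξ is continuous and nonnegative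
  have hξc : Continuous ξ := by
    have h : ξ = fun t => Real.sqrt (c ^ 2 * Real.sin (φ t) ^ 2 + x t ^ 2) :=
      funext fun t => hξ t
    rw [h]
    exact Real.continuous_sqrt.comp
      (((continuous_const.mul ((Real.continuous_sin.comp hφ.continuous).pow 2)).add
        (hx.continuous.pow 2)))
  have hξnn : ∀ t, 0 ≤ ξ t := fun t => (hξ t) ▸ Real.sqrt_nonneg _
  have hξ0pos : 0 < ξ 0 := lt_of_le_of_ne (hξnn 0) (Ne.symm hξ0)
  -- lower bound for |βb| near 0
  have hb := abs_pos.2 hβb0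
  obtain ⟨δ₁, hδ₁, hβbdl⟩ := Metric.continuousAt_iff.mp hβb.continuous.continuousAt
    (|βb 0| / 2) (by positivity)
  -- lower bound for ξ near 0
  obtain ⟨δ₂, hδ₂, hξdl⟩ := Metric.continuousAt_iff.mp hξc.continuousAt
    (ξ 0 / 2) (by positivity)
  -- bounds on the compact interval [-1,1]
  obtain ⟨M, hM⟩ := (isCompact_Icc (a := (-1:ℝ)) (b := 1)).exists_bound_of_continuousOn
    hβb.continuous.continuousOn
  obtain ⟨L, hL⟩ := (isCompact_Icc (a := (-1:ℝ)) (b := 1)).exists_bound_of_continuousOn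
    hℓc.continuousOn
  obtain ⟨Ξ, hΞ⟩ := (isCompact_Icc (a := (-1:ℝ)) (b := 1)).exists_bound_of_continuousOn
    hξc.continuousOn
  have h01 : (0:ℝ) ∈ Set.Icc (-1:ℝ) 1 := by norm_num
  have hM0 : 0 ≤ M := le_trans (abs_nonneg _) (hM 0 h01)
  have hL0 : 0 ≤ L := le_trans (abs_nonneg _) (hL 0 h01)
  have hΞ0 : 0 ≤ Ξ := le_trans (abs_nonneg _) (hΞ 0 h01)
  set b := |βb 0| / 2 with hbdef
  set ξm := ξ 0 / 2 with hξmdef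
  have hbpos : 0 < b := by positivity
  have hξmpos : 0 < ξm := by positivity
  -- the constant
  refine ⟨max ((c ^ 2 * M + M ^ 3 * L) / (b * ξm ^ 4))
      ((M * (Ξ ^ 2 + c ^ 2) + M * L * (M ^ 2 + c ^ 2)) / (2 * b * ξm ^ 3)),
    min 1 (min δ₁ δ₂), lt_min one_pos (lt_min hδ₁ hδ₂), ?_⟩
  intro t ht htδ
  have ht1 : |t| < 1 := lt_of_lt_of_le htδ (min_le_left _ _)
  have htδ₁ : |t| < δ₁ := lt_of_lt_of_le htδ (le_trans (min_le_right _ _) (min_le_left _ _))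
  have htδ₂ : |t| < δ₂ := lt_of_lt_of_le htδ (le_trans (min_le_right _ _) (min_le_right _ _))
  have htm : (0:ℝ) < |t| ^ m := pow_pos (abs_pos.2 ht) m
  -- lower bound |βb t| ≥ b
  have hβblb : b ≤ |βb t| := by
    have h1 : dist t 0 < δ₁ := by simpa [Real.dist_eq] using htδ₁
    have h2 := hβbdl h1
    rw [Real.dist_eq] at h2
    have h3 := abs_sub_abs_le_abs_sub (βb 0) (βb t)
    rw [abs_sub_comm] at h3
    rw [hbdef]
    linarith [le_of_lt h2]
  -- lower bound ξ t ≥ ξm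
  have hξlb : ξm ≤ ξ t := by
    have h1 : dist t 0 < δ₂ := by simpa [Real.dist_eq] using htδ₂
    have h2 := hξdl h1
    rw [Real.dist_eq, abs_sub_lt_iff] at h2
    rw [hξmdef]
    linarith [h2.2]
  have hξtpos : 0 < ξ t := lt_of_lt_of_le hξmpos hξlb
  have htmem : t ∈ Set.Icc (-1:ℝ) 1 :=
    ⟨by linarith [neg_abs_le t], by linarith [le_abs_self t]⟩
  -- |β t| ≤ M |t|^m
  have hβub : |β t| ≤ M * |t| ^ m := by
    rw [hβ t, abs_mul, abs_pow]
    calc |t| ^ m * |βb t| ≤ |t| ^ m * M :=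
          mul_le_mul_of_nonneg_left (hM t htmem) (le_of_lt htm)
      _ = M * |t| ^ m := mul_comm _ _
  -- key bound : |x t| ≤ M * |t|^(m+1)
  have hxb : |x t| ≤ M * |t| ^ (m + 1) := by
    have hconv : Convex ℝ (Set.uIcc (0:ℝ) t) := convex_uIcc _ _
    have hdiff : ∀ u ∈ Set.uIcc (0:ℝ) t, DifferentiableAt ℝ x u :=
      fun u _ => (hx.differentiable (by simp)) u
    have hbound : ∀ u ∈ Set.uIcc (0:ℝ) t, ‖deriv x u‖ ≤ M * |t| ^ m := by
      intro u hu
      have hu' : |u| ≤ |t| := by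
        rw [Set.uIcc_eq_union, Set.mem_union] at hu
        rw [abs_le]
        rcases hu with ⟨h1, h2⟩ | ⟨h1, h2⟩ <;>
          exact ⟨by linarith [neg_abs_le t, abs_nonneg t],
                 by linarith [le_abs_self t, abs_nonneg t]⟩
      have hu1 : u ∈ Set.Icc (-1:ℝ) 1 :=
        ⟨by linarith [neg_abs_le u, le_of_lt ht1], by linarith [le_abs_self u, le_of_lt ht1]⟩
      rw [hx' u, Real.norm_eq_abs, hβ u]
      calc |-(u ^ m * βb u) * Real.sin (φ u)|
          = |u| ^ m * (|βb u| * |Real.sin (φ u)|) := by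
            rw [abs_mul, abs_neg, abs_mul, abs_pow]; ring
        _ ≤ |t| ^ m * (M * 1) :=
            mul_le_mul (pow_le_pow_left₀ (abs_nonneg u) hu' m)
              (mul_le_mul (hM u hu1) (Real.abs_sin_le_one _) (abs_nonneg _) hM0)
              (by positivity) (by positivity)
        _ = M * |t| ^ m := by ring
    have hmvt := hconv.norm_image_sub_le_of_norm_deriv_le hdiff hbound
      (Set.left_mem_uIcc) (Set.right_mem_uIcc)
    rw [hx0, sub_zero, sub_zero, Real.norm_eq_abs, Real.norm_eq_abs] at hmvt
    calc |x t| ≤ M * |t| ^ m * |t| := hmvt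
      _ = M * |t| ^ (m + 1) := by rw [pow_succ]; ring
  have habs1 : |t| ≤ 1 := le_of_lt ht1
  have hxb1 : |x t| ≤ M :=
    calc |x t| ≤ M * |t| ^ (m + 1) := hxb
      _ ≤ M * 1 := mul_le_mul_of_nonneg_left (pow_le_one₀ (abs_nonneg t) habs1) hM0
      _ = M := mul_one M
  have hxtm : |x t| ≤ M * |t| ^ m :=
    calc |x t| ≤ M * |t| ^ (m + 1) := hxb
      _ ≤ M * |t| ^ m := mul_le_mul_of_nonneg_left
          (pow_le_pow_of_le_one (abs_nonneg t) habs1 (Nat.le_succ m)) hM0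
  -- |x t|^3 ≤ M^3 |t|^m
  have hxb3 : |x t| ^ 3 ≤ M ^ 3 * |t| ^ m := by
    calc |x t| ^ 3 ≤ (M * |t| ^ (m + 1)) ^ 3 :=
          pow_le_pow_left₀ (abs_nonneg _) hxb 3
      _ = M ^ 3 * |t| ^ ((m + 1) * 3) := by rw [mul_pow, ← pow_mul]
      _ ≤ M ^ 3 * |t| ^ m := mul_le_mul_of_nonneg_left
          (pow_le_pow_of_le_one (abs_nonneg t) habs1 (by omega)) (by positivity)
  -- denominator lower bound pieces
  have hβtabs : b * |t| ^ m ≤ |β t| := by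
    rw [hβ t, abs_mul, abs_pow]
    calc b * |t| ^ m = |t| ^ m * b := mul_comm _ _
      _ ≤ |t| ^ m * |βb t| := mul_le_mul_of_nonneg_left hβblb (le_of_lt htm)
  constructor
  · -- Gaussian curvature
    refine le_trans ?_ (le_max_left _ _)
    rw [abs_div]
    have hdenlb : b * ξm ^ 4 * |t| ^ m ≤ |β t * ξ t ^ 4| := by
      rw [abs_mul, abs_pow, abs_of_pos hξtpos]
      calc b * ξm ^ 4 * |t| ^ m = (b * |t| ^ m) * ξm ^ 4 := by ring
        _ ≤ |β t| * ξ t ^ 4 := mul_le_mul hβtabs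
            (pow_le_pow_left₀ (le_of_lt hξmpos) hξlb 4) (by positivity) (abs_nonneg _)
    have h1 : |c ^ 2 * β t * Real.sin (φ t) ^ 4| ≤ c ^ 2 * (M * |t| ^ m) := by
      rw [abs_mul, abs_mul, abs_pow, abs_pow, sq_abs]
      calc c ^ 2 * |β t| * |Real.sin (φ t)| ^ 4
          ≤ c ^ 2 * (M * |t| ^ m) * 1 :=
            mul_le_mul (mul_le_mul_of_nonneg_left hβub (sq_nonneg c))
              (pow_le_one₀ (abs_nonneg _) (Real.abs_sin_le_one _))
              (by positivity) (by positivity)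
        _ = c ^ 2 * (M * |t| ^ m) := mul_one _
    have h2 : |x t ^ 3 * ℓ t * Real.cos (φ t)| ≤ M ^ 3 * L * |t| ^ m := by
      rw [abs_mul, abs_mul, abs_pow]
      calc |x t| ^ 3 * |ℓ t| * |Real.cos (φ t)|
          ≤ (M ^ 3 * |t| ^ m) * L * 1 :=
            mul_le_mul (mul_le_mul hxb3 (hL t htmem) (abs_nonneg _) (by positivity))
              (Real.abs_cos_le_one _) (abs_nonneg _) (by positivity)
        _ = M ^ 3 * L * |t| ^ m := by ring
    have hnum : |c ^ 2 * β t * Real.sin (φ t) ^ 4 - x t ^ 3 * ℓ t * Real.cos (φ t)|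
        ≤ (c ^ 2 * M + M ^ 3 * L) * |t| ^ m := by
      calc |c ^ 2 * β t * Real.sin (φ t) ^ 4 - x t ^ 3 * ℓ t * Real.cos (φ t)|
          ≤ |c ^ 2 * β t * Real.sin (φ t) ^ 4| + |x t ^ 3 * ℓ t * Real.cos (φ t)| :=
            abs_sub _ _
        _ ≤ c ^ 2 * (M * |t| ^ m) + M ^ 3 * L * |t| ^ m := add_le_add h1 h2
        _ = (c ^ 2 * M + M ^ 3 * L) * |t| ^ m := by ring
    calc |c ^ 2 * β t * Real.sin (φ t) ^ 4 - x t ^ 3 * ℓ t * Real.cos (φ t)| /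
          |β t * ξ t ^ 4|
        ≤ ((c ^ 2 * M + M ^ 3 * L) * |t| ^ m) / (b * ξm ^ 4 * |t| ^ m) :=
          div_le_div₀ (by positivity) hnum (by positivity) hdenlb
      _ = (c ^ 2 * M + M ^ 3 * L) / (b * ξm ^ 4) := by
          rw [mul_div_mul_right _ _ (ne_of_gt htm)]
  · -- Mean curvature
    refine le_trans ?_ (le_max_right _ _)
    rw [abs_div]
    have hdenlb : 2 * b * ξm ^ 3 * |t| ^ m ≤ |2 * β t * ξ t ^ 3| := by
      rw [abs_mul, abs_mul, abs_pow, abs_of_pos hξtpos, abs_two]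
      calc 2 * b * ξm ^ 3 * |t| ^ m = 2 * ((b * |t| ^ m) * ξm ^ 3) := by ring
        _ ≤ 2 * (|β t| * ξ t ^ 3) := mul_le_mul_of_nonneg_left
            (mul_le_mul hβtabs (pow_le_pow_left₀ (le_of_lt hξmpos) hξlb 3)
              (by positivity) (abs_nonneg _)) (by norm_num)
        _ = 2 * |β t| * ξ t ^ 3 := by ring
    have hξub : ξ t ≤ Ξ := le_trans (le_abs_self _) (hΞ t htmem)
    have hfac1 : |ξ t ^ 2 + c ^ 2 * Real.sin (φ t) ^ 2| ≤ Ξ ^ 2 + c ^ 2 := by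
      rw [abs_of_nonneg (by positivity)]
      have hs : c ^ 2 * Real.sin (φ t) ^ 2 ≤ c ^ 2 :=
        calc c ^ 2 * Real.sin (φ t) ^ 2 ≤ c ^ 2 * 1 :=
              mul_le_mul_of_nonneg_left (Real.sin_sq_le_one _) (sq_nonneg c)
          _ = c ^ 2 := mul_one _
      have h2 : ξ t ^ 2 ≤ Ξ ^ 2 := pow_le_pow_left₀ hξtpos.le hξub 2
      linarith
    have hfac2 : |x t ^ 2 + c ^ 2| ≤ M ^ 2 + c ^ 2 := by
      rw [abs_of_nonneg (by positivity)]
      have hs : x t ^ 2 ≤ M ^ 2 := by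
        rw [← sq_abs]
        exact pow_le_pow_left₀ (abs_nonneg _) hxb1 2
      linarith
    have h1 : |β t * Real.cos (φ t) * (ξ t ^ 2 + c ^ 2 * Real.sin (φ t) ^ 2)|
        ≤ M * |t| ^ m * (Ξ ^ 2 + c ^ 2) := by
      rw [abs_mul, abs_mul]
      calc |β t| * |Real.cos (φ t)| * |ξ t ^ 2 + c ^ 2 * Real.sin (φ t) ^ 2|
          ≤ (M * |t| ^ m * 1) * (Ξ ^ 2 + c ^ 2) :=
            mul_le_mul (mul_le_mul hβub (Real.abs_cos_le_one _) (abs_nonneg _)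
              (by positivity)) hfac1 (abs_nonneg _) (by positivity)
        _ = M * |t| ^ m * (Ξ ^ 2 + c ^ 2) := by ring
    have h2 : |x t * ℓ t * (x t ^ 2 + c ^ 2)| ≤ M * |t| ^ m * L * (M ^ 2 + c ^ 2) := by
      rw [abs_mul, abs_mul]
      exact mul_le_mul (mul_le_mul hxtm (hL t htmem) (abs_nonneg _) (by positivity))
        hfac2 (abs_nonneg _) (by positivity)
    have hnum : |β t * Real.cos (φ t) * (ξ t ^ 2 + c ^ 2 * Real.sin (φ t) ^ 2) +
          x t * ℓ t * (x t ^ 2 + c ^ 2)|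
        ≤ (M * (Ξ ^ 2 + c ^ 2) + M * L * (M ^ 2 + c ^ 2)) * |t| ^ m := by
      calc |β t * Real.cos (φ t) * (ξ t ^ 2 + c ^ 2 * Real.sin (φ t) ^ 2) +
            x t * ℓ t * (x t ^ 2 + c ^ 2)|
          ≤ |β t * Real.cos (φ t) * (ξ t ^ 2 + c ^ 2 * Real.sin (φ t) ^ 2)| +
            |x t * ℓ t * (x t ^ 2 + c ^ 2)| := abs_add_le _ _
        _ ≤ M * |t| ^ m * (Ξ ^ 2 + c ^ 2) + M * |t| ^ m * L * (M ^ 2 + c ^ 2) :=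
            add_le_add h1 h2
        _ = (M * (Ξ ^ 2 + c ^ 2) + M * L * (M ^ 2 + c ^ 2)) * |t| ^ m := by ring
    calc |β t * Real.cos (φ t) * (ξ t ^ 2 + c ^ 2 * Real.sin (φ t) ^ 2) +
          x t * ℓ t * (x t ^ 2 + c ^ 2)| / |2 * β t * ξ t ^ 3|
        ≤ ((M * (Ξ ^ 2 + c ^ 2) + M * L * (M ^ 2 + c ^ 2)) * |t| ^ m) /
          (2 * b * ξm ^ 3 * |t| ^ m) :=
          div_le_div₀ (by positivity) hnum (by positivity) hdenlb
      _ = (M * (Ξ ^ 2 + c ^ 2) + M * L * (M ^ 2 + c ^ 2)) / (2 * b * ξm ^ 3) := by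
          rw [mul_div_mul_right _ _ (ne_of_gt htm)]
end
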